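/- arXiv:2011.11298 — 2 statements merged into one kernel-verified Lean document; each statement's English description precedes it below -/
import Mathlib

section
/- Let p, q > 0 and β₁, β₂ > 0, and let μ be the pushforward of the Beta(p, q) probability measure on ℝ under the affine map x ↦ -β₁ + (β₁ + β₂)·x. Then for every z with -β₁ ≤ z < β₂, μ((-∞, z]) = (Γ(p+q)/(Γ(p)·Γ(q))) · ∫₀^((z+β₁)/(β₂-z)) s^(p-1) · (1+s)^(-(p+q)) ds. -/
/-! The affine map pulls `Iic z` back to `Iic t` with `t = (z + β₁) / (β₁ + β₂) < 1`, so `μ (Iic z)`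
is `Γ(p+q)/(Γ(p)Γ(q))` times the integral of `x^(p-1) (1-x)^(q-1)` over `[0, t]`. The substitution
`x = s / (1 + s)` maps `[0, T]` onto `[0, T / (1 + T)]` and turns this integrand into
`s^(p-1) (1+s)^(-(p+q))`; for `T = (z + β₁) / (β₂ - z)` one has `T / (1 + T) = t`. -/

open MeasureTheory Real

/-- The Beta(p,q) probability measure on ℝ: the measure supported on `[0,1]` with density
`x ↦ Γ(p+q)/(Γ(p)Γ(q)) * x^(p-1) * (1-x)^(q-1)` with respect to Lebesgue measure. -/
noncomputable def betaMeasure (p q : ℝ) : Measure ℝ :=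
  volume.withDensity (fun x => ENNReal.ofReal (Set.indicator (Set.Icc (0:ℝ) 1)
    (fun x => Real.Gamma (p + q) / (Real.Gamma p * Real.Gamma q)
      * x ^ (p - 1) * (1 - x) ^ (q - 1)) x))

open Set

lemma hasDerivAt_div_one_add {s : ℝ} (hs : 1 + s ≠ 0) :
    HasDerivAt (fun s : ℝ => s / (1 + s)) ((1 + s) ^ 2)⁻¹ s :=
  ((hasDerivAt_id' s).div ((hasDerivAt_id' s).const_add 1) hs).congr_deriv (by ring)

lemma inv_sq_mul_rpow_div_one_add {p q s : ℝ} (hs : 0 ≤ s) :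
    ((1 + s) ^ 2)⁻¹ * ((s / (1 + s)) ^ (p - 1) * (1 - s / (1 + s)) ^ (q - 1))
      = s ^ (p - 1) * (1 + s) ^ (-(p + q)) := by
  have h1s : 0 < 1 + s := by linarith
  have hsub : 1 - s / (1 + s) = (1 + s)⁻¹ := by field_simp; ring
  rw [hsub, div_rpow hs h1s.le, inv_rpow h1s.le, ← rpow_natCast, ← rpow_neg h1s.le,
    ← rpow_neg h1s.le, show -(p + q) = -((2 : ℕ) : ℝ) + -(p - 1) + -(q - 1) by push_cast; ring,
    rpow_add h1s, rpow_add h1s, rpow_neg h1s.le (p - 1)]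
  field_simp

lemma integral_rpow_mul_one_sub_rpow_eq_integral_rpow_mul_one_add_rpow (p q : ℝ) {T : ℝ}
    (hT : 0 ≤ T) :
    ∫ x in (0:ℝ)..T / (1 + T), x ^ (p - 1) * (1 - x) ^ (q - 1)
      = ∫ s in (0:ℝ)..T, s ^ (p - 1) * (1 + s) ^ (-(p + q)) := by
  have hderiv : ∀ s ∈ Ioo 0 T, HasDerivAt (fun s : ℝ => s / (1 + s)) ((1 + s) ^ 2)⁻¹ s :=
    fun s hs => hasDerivAt_div_one_add (by linarith [hs.1])
  have hcont : ContinuousOn (fun s : ℝ => s / (1 + s)) (Icc 0 T) :=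
    continuousOn_id.div (by fun_prop) fun s hs => by linarith [hs.1]
  have hsubst := integral_Icc_deriv_smul_of_deriv_nonneg hcont hderiv (fun s _ => by positivity) hT
    (g := fun x => x ^ (p - 1) * (1 - x) ^ (q - 1))
  simp only [zero_div, add_zero, smul_eq_mul] at hsubst
  rw [intervalIntegral.integral_of_le (by positivity), intervalIntegral.integral_of_le hT,
    ← integral_Icc_eq_integral_Ioc, ← integral_Icc_eq_integral_Ioc, ← hsubst]
  exact setIntegral_congr_fun measurableSet_Icc fun s hs => inv_sq_mul_rpow_div_one_add hs.1

lemma betaMeasure_Iic {p q : ℝ} (hp : 0 < p) (hq : 0 < q) {t : ℝ} (ht0 : 0 ≤ t) (ht1 : t < 1) :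
    betaMeasure p q (Iic t) = ENNReal.ofReal (Gamma (p + q) / (Gamma p * Gamma q)
      * ∫ x in (0:ℝ)..t, x ^ (p - 1) * (1 - x) ^ (q - 1)) := by
  set C := Gamma (p + q) / (Gamma p * Gamma q)
  have hset : Icc (0:ℝ) 1 ∩ Iic t = Icc 0 t := by
    ext x; simp only [mem_inter_iff, mem_Icc, mem_Iic]; grind
  have hint : IntervalIntegrable (fun x => C * (x ^ (p - 1) * (1 - x) ^ (q - 1))) volume 0 t := by
    refine ((intervalIntegral.intervalIntegrable_rpow' (by linarith)).mul_continuousOn ?_).const_mul C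
    refine ContinuousOn.rpow_const (by fun_prop) fun x hx => Or.inl ?_
    rw [uIcc_of_le ht0] at hx
    linarith [hx.2]
  have hnonneg : 0 ≤ᵐ[volume.restrict (Ioc 0 t)] fun x => C * (x ^ (p - 1) * (1 - x) ^ (q - 1)) := by
    filter_upwards [ae_restrict_mem measurableSet_Ioc] with x hx
    have : 0 ≤ 1 - x := by linarith [hx.2]
    have : 0 ≤ x := hx.1.le
    positivity
  rw [betaMeasure, withDensity_apply _ measurableSet_Iic,
    ← Function.comp_def ENNReal.ofReal, ← indicator_comp_of_zero ENNReal.ofReal_zero,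
    lintegral_indicator measurableSet_Icc, Measure.restrict_restrict measurableSet_Icc, hset,
    ← intervalIntegral.integral_const_mul, intervalIntegral.integral_of_le ht0,
    ofReal_integral_eq_lintegral_ofReal hint.1 hnonneg, ← Measure.restrict_congr_set Ioc_ae_eq_Icc]
  simp only [Function.comp_apply, mul_assoc, C]

theorem stmt_3_general (p q β₁ β₂ : ℝ) (hp : 0 < p) (hq : 0 < q)
    (μ : Measure ℝ) (hμ : μ = Measure.map (fun x => -β₁ + (β₁ + β₂) * x) (betaMeasure p q)) :
    ∀ z, -β₁ ≤ z → z < β₂ →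
      μ (Set.Iic z) = ENNReal.ofReal (Real.Gamma (p + q) / (Real.Gamma p * Real.Gamma q)
        * ∫ s in (0:ℝ)..((z + β₁) / (β₂ - z)), s ^ (p - 1) * (1 + s) ^ (-(p + q))) := by
  intro z hz₁ hz₂
  have hβ : 0 < β₁ + β₂ := by linarith
  set T := (z + β₁) / (β₂ - z)
  have hT : 0 ≤ T := div_nonneg (by linarith) (by linarith)
  have hT_div : T / (1 + T) = (z + β₁) / (β₁ + β₂) := by
    have : β₂ - z ≠ 0 := by linarith
    rw [one_add_div this, div_div_div_cancel_right₀ this]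
    ring_nf
  have hpre : (fun x => -β₁ + (β₁ + β₂) * x) ⁻¹' Iic z = Iic (T / (1 + T)) := by
    ext x
    rw [hT_div, mem_preimage, mem_Iic, mem_Iic, le_div_iff₀ hβ]
    constructor <;> intro <;> linarith
  rw [hμ, Measure.map_apply (by fun_prop) measurableSet_Iic, hpre,
    betaMeasure_Iic hp hq (by positivity) (by rw [div_lt_one (by linarith)]; linarith),
    integral_rpow_mul_one_sub_rpow_eq_integral_rpow_mul_one_add_rpow p q hT]

theorem stmt_3 (p q β₁ β₂ : ℝ) (hp : 0 < p) (hq : 0 < q) (hβ₁ : 0 < β₁) (hβ₂ : 0 < β₂)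
    (μ : Measure ℝ) (hμ : μ = Measure.map (fun x => -β₁ + (β₁ + β₂) * x) (betaMeasure p q)) :
    ∀ z, -β₁ ≤ z → z < β₂ →
      μ (Set.Iic z) = ENNReal.ofReal (Real.Gamma (p + q) / (Real.Gamma p * Real.Gamma q)
        * ∫ s in (0:ℝ)..((z + β₁) / (β₂ - z)), s ^ (p - 1) * (1 + s) ^ (-(p + q))) :=
  stmt_3_general p q β₁ β₂ hp hq μ hμ
end

section
/- Let C₁, C₂, M₁, M₂ > 0 be real numbers, let k₁, k₂ be natural numbers with 0 < k₁ < k₂, let h > 0, and set β₁ = C₁·h^(k₁)·M₁, β₂ = C₂·h^(k₂)·M₂ and h* = (C₁·M₁/(C₂·M₂))^(1/(k₂-k₁)). Let X₁, X₂ be independent real random variables on a probability space, with X₁ uniformly distributed on [0, β₁] and X₂ uniformly distributed on [0, β₂]. Then the probability 𝒫(h) of the event {X₂ ≤ X₁} satisfies: 𝒫(h) = 1 - (1/2)·(h/h*)^(k₂-k₁) if 0 < h ≤ h*, and 𝒫(h) = (1/2)·(h*/h)^(k₂-k₁) if h ≥ h*. -/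
/-!
By independence, `ℙ(X₂ ≤ X₁)` is the mass of the half-plane `{y ≤ x}` under the product of the two
uniform laws, and Tonelli turns this into `(β₁ β₂)⁻¹ ∫₀^β₁ min β₂ x dx`, which equals
`1 - β₂ / (2 β₁)` if `β₂ ≤ β₁` and `β₁ / (2 β₂)` if `β₁ ≤ β₂`. The critical mesh size is chosen so
that `(h / h*) ^ (k₂ - k₁) = β₂ / β₁`; hence `h ≤ h*` exactly when `β₂ ≤ β₁`.
-/

open MeasureTheory ProbabilityTheory Set

lemma ProbabilityTheory.IndepFun.measure_preimage_eq_prod_map {Ω α β : Type*}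
    [MeasurableSpace Ω] [MeasurableSpace α] [MeasurableSpace β] {μ : Measure Ω}
    [IsFiniteMeasure μ] {X : Ω → α} {Y : Ω → β} (hX : Measurable X) (hY : Measurable Y)
    (hXY : IndepFun X Y μ) {S : Set (α × β)} (hS : MeasurableSet S) :
    μ ((fun ω ↦ (X ω, Y ω)) ⁻¹' S) = (μ.map X).prod (μ.map Y) S := by
  rw [← hXY.map_prod_eq_prod_map_map hX.aemeasurable hY.aemeasurable,
    Measure.map_apply (hX.prodMk hY) hS]

lemma volume_Iic_inter_Icc (b x : ℝ) :
    volume (Iic x ∩ Icc 0 b) = ENNReal.ofReal (min b x) := by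
  have hset : Iic x ∩ Icc 0 b = Icc 0 (min b x) := by
    ext y; simp only [mem_inter_iff, mem_Icc, mem_Iic, le_min_iff]; tauto
  rw [hset, Real.volume_Icc, sub_zero]

lemma lintegral_Icc_ofReal_min {a b : ℝ} (ha : 0 ≤ a) (hb : 0 ≤ b) :
    ∫⁻ x in Icc 0 a, ENNReal.ofReal (min b x) = ENNReal.ofReal (∫ x in (0:ℝ)..a, min b x) := by
  have hcont : Continuous fun x : ℝ ↦ min b x := continuous_const.min continuous_id
  rw [intervalIntegral.integral_of_le ha, ← integral_Icc_eq_integral_Ioc,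
    ofReal_integral_eq_lintegral_ofReal hcont.integrableOn_Icc]
  filter_upwards [ae_restrict_mem measurableSet_Icc] with x hx
  exact le_min hb hx.1

lemma measure_le_of_indepFun_uniform {Ω : Type*} [MeasurableSpace Ω] {μ : Measure Ω}
    [IsFiniteMeasure μ] {a b : ℝ} (ha : 0 < a) (hb : 0 < b)
    {X₁ X₂ : Ω → ℝ} (hm₁ : Measurable X₁) (hm₂ : Measurable X₂) (hindep : IndepFun X₁ X₂ μ)
    (hX₁ : μ.map X₁ = (ENNReal.ofReal a)⁻¹ • volume.restrict (Icc (0:ℝ) a))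
    (hX₂ : μ.map X₂ = (ENNReal.ofReal b)⁻¹ • volume.restrict (Icc (0:ℝ) b)) :
    μ {ω | X₂ ω ≤ X₁ ω} = ENNReal.ofReal ((∫ x in (0:ℝ)..a, min b x) / (a * b)) := by
  have hS : MeasurableSet {p : ℝ × ℝ | p.2 ≤ p.1} := measurableSet_le measurable_snd measurable_fst
  have hsection : ∀ x : ℝ,
      ((ENNReal.ofReal b)⁻¹ • volume.restrict (Icc (0:ℝ) b)) (Prod.mk x ⁻¹' {p | p.2 ≤ p.1})
        = (ENNReal.ofReal b)⁻¹ * ENNReal.ofReal (min b x) := fun x ↦ by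
    rw [show Prod.mk x ⁻¹' {p : ℝ × ℝ | p.2 ≤ p.1} = Iic x from rfl, Measure.smul_apply,
      smul_eq_mul, Measure.restrict_apply measurableSet_Iic, volume_Iic_inter_Icc]
  calc μ {ω | X₂ ω ≤ X₁ ω}
      = (μ.map X₁).prod (μ.map X₂) {p | p.2 ≤ p.1} :=
        hindep.measure_preimage_eq_prod_map hm₁ hm₂ hS
    _ = (ENNReal.ofReal a)⁻¹ * ((ENNReal.ofReal b)⁻¹ *
          ∫⁻ x in Icc 0 a, ENNReal.ofReal (min b x)) := by
        rw [hX₁, hX₂, Measure.prod_apply hS, lintegral_smul_measure, smul_eq_mul,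
          setLIntegral_congr_fun measurableSet_Icc fun x _ ↦ hsection x,
          lintegral_const_mul' _ _ (ENNReal.inv_ne_top.mpr (by simpa using hb))]
    _ = ENNReal.ofReal ((∫ x in (0:ℝ)..a, min b x) / (a * b)) := by
        rw [lintegral_Icc_ofReal_min ha.le hb.le, ← ENNReal.ofReal_inv_of_pos ha,
          ← ENNReal.ofReal_inv_of_pos hb, ← ENNReal.ofReal_mul (by positivity),
          ← ENNReal.ofReal_mul (by positivity)]
        congr 1
        field_simp

lemma integral_min_of_le {a b : ℝ} (ha : 0 ≤ a) (hab : a ≤ b) :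
    ∫ x in (0:ℝ)..a, min b x = a ^ 2 / 2 := by
  rw [intervalIntegral.integral_congr (g := id) fun x hx ↦ by
    rw [uIcc_of_le ha] at hx
    exact min_eq_right (hx.2.trans hab)]
  simp

lemma integral_min_of_ge {a b : ℝ} (hb : 0 ≤ b) (hba : b ≤ a) :
    ∫ x in (0:ℝ)..a, min b x = a * b - b ^ 2 / 2 := by
  have hcont : Continuous fun x : ℝ ↦ min b x := continuous_const.min continuous_id
  rw [← intervalIntegral.integral_add_adjacent_intervals (hcont.intervalIntegrable 0 b)
    (hcont.intervalIntegrable b a), integral_min_of_le hb le_rfl,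
    intervalIntegral.integral_congr (g := fun _ ↦ b) fun x hx ↦ by
      rw [uIcc_of_le hba] at hx
      exact min_eq_left hx.1]
  rw [intervalIntegral.integral_const, smul_eq_mul]
  ring

lemma rpow_one_div_sub_pow {c : ℝ} (hc : 0 ≤ c) {k₁ k₂ : ℕ} (hk : k₁ < k₂) :
    (c ^ ((1:ℝ) / ((k₂:ℝ) - (k₁:ℝ)))) ^ (k₂ - k₁) = c := by
  rw [← Nat.cast_sub hk.le, one_div]
  exact Real.rpow_inv_natCast_pow hc (by omega)

lemma div_pow_sub_eq_div {C₁ C₂ M₁ M₂ h hstar : ℝ} (hC₁ : C₁ ≠ 0) (hC₂ : C₂ ≠ 0)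
    (hM₁ : M₁ ≠ 0) (hM₂ : M₂ ≠ 0) (hh : h ≠ 0) {k₁ k₂ : ℕ} (hk : k₁ ≤ k₂)
    (hstar_pow : hstar ^ (k₂ - k₁) = C₁ * M₁ / (C₂ * M₂)) :
    (h / hstar) ^ (k₂ - k₁) = C₂ * h ^ k₂ * M₂ / (C₁ * h ^ k₁ * M₁) := by
  rw [div_pow, hstar_pow, ← Nat.sub_add_cancel hk, pow_add, Nat.add_sub_cancel]
  field_simp

theorem stmt_15_general {Ω : Type*} [MeasureSpace Ω] [IsProbabilityMeasure (ℙ : Measure Ω)]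
    (C₁ C₂ M₁ M₂ : ℝ) (hC₁ : 0 < C₁) (hC₂ : 0 < C₂) (hM₁ : 0 < M₁) (hM₂ : 0 < M₂)
    (k₁ k₂ : ℕ) (hk : k₁ < k₂) (h : ℝ) (hh : 0 < h)
    (β₁ β₂ hstar : ℝ)
    (hβ₁_def : β₁ = C₁ * h ^ k₁ * M₁) (hβ₂_def : β₂ = C₂ * h ^ k₂ * M₂)
    (hstar_def : hstar = (C₁ * M₁ / (C₂ * M₂)) ^ ((1:ℝ) / ((k₂:ℝ) - (k₁:ℝ))))
    (X₁ X₂ : Ω → ℝ) (hm₁ : Measurable X₁) (hm₂ : Measurable X₂)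
    (hindep : IndepFun X₁ X₂ ℙ)
    (hX₁ : Measure.map X₁ ℙ = (ENNReal.ofReal β₁)⁻¹ • volume.restrict (Set.Icc (0:ℝ) β₁))
    (hX₂ : Measure.map X₂ ℙ = (ENNReal.ofReal β₂)⁻¹ • volume.restrict (Set.Icc (0:ℝ) β₂)) :
    (h ≤ hstar →
      ℙ {ω | X₂ ω ≤ X₁ ω} = ENNReal.ofReal (1 - (1/2) * (h / hstar) ^ (k₂ - k₁))) ∧
    (hstar ≤ h →
      ℙ {ω | X₂ ω ≤ X₁ ω} = ENNReal.ofReal ((1/2) * (hstar / h) ^ (k₂ - k₁))) := by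
  have hβ₁ : 0 < β₁ := by rw [hβ₁_def]; positivity
  have hβ₂ : 0 < β₂ := by rw [hβ₂_def]; positivity
  have hstar_pos : 0 < hstar := by rw [hstar_def]; positivity
  have hratio : (h / hstar) ^ (k₂ - k₁) = β₂ / β₁ := by
    rw [hβ₁_def, hβ₂_def]
    refine div_pow_sub_eq_div hC₁.ne' hC₂.ne' hM₁.ne' hM₂.ne' hh.ne' hk.le ?_
    rw [hstar_def]
    exact rpow_one_div_sub_pow (by positivity) hk
  have hratio' : (hstar / h) ^ (k₂ - k₁) = β₁ / β₂ := by
    rw [← inv_div, inv_pow, hratio, inv_div]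
  have hP := measure_le_of_indepFun_uniform hβ₁ hβ₂ hm₁ hm₂ hindep hX₁ hX₂
  refine ⟨fun hle ↦ ?_, fun hge ↦ ?_⟩
  · have hβ : β₂ / β₁ ≤ 1 :=
      hratio ▸ pow_le_one₀ (by positivity) ((div_le_one hstar_pos).mpr hle)
    rw [hP, integral_min_of_ge hβ₂.le ((div_le_one hβ₁).mp hβ), hratio]
    congr 1
    field_simp
  · have hβ : β₁ / β₂ ≤ 1 :=
      hratio' ▸ pow_le_one₀ (by positivity) ((div_le_one hh).mpr hge)
    rw [hP, integral_min_of_le hβ₁.le ((div_le_one hβ₂).mp hβ), hratio']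
    congr 1
    field_simp

theorem stmt_15 {Ω : Type*} [MeasureSpace Ω] [IsProbabilityMeasure (ℙ : Measure Ω)]
    (C₁ C₂ M₁ M₂ : ℝ) (hC₁ : 0 < C₁) (hC₂ : 0 < C₂) (hM₁ : 0 < M₁) (hM₂ : 0 < M₂)
    (k₁ k₂ : ℕ) (hk₁ : 0 < k₁) (hk : k₁ < k₂) (h : ℝ) (hh : 0 < h)
    (β₁ β₂ hstar : ℝ)
    (hβ₁_def : β₁ = C₁ * h ^ k₁ * M₁) (hβ₂_def : β₂ = C₂ * h ^ k₂ * M₂)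
    (hstar_def : hstar = (C₁ * M₁ / (C₂ * M₂)) ^ ((1:ℝ) / ((k₂:ℝ) - (k₁:ℝ))))
    (X₁ X₂ : Ω → ℝ) (hm₁ : Measurable X₁) (hm₂ : Measurable X₂)
    (hindep : IndepFun X₁ X₂ ℙ)
    (hX₁ : Measure.map X₁ ℙ = (ENNReal.ofReal β₁)⁻¹ • volume.restrict (Set.Icc (0:ℝ) β₁))
    (hX₂ : Measure.map X₂ ℙ = (ENNReal.ofReal β₂)⁻¹ • volume.restrict (Set.Icc (0:ℝ) β₂)) :
    (h ≤ hstar →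
      ℙ {ω | X₂ ω ≤ X₁ ω} = ENNReal.ofReal (1 - (1/2) * (h / hstar) ^ (k₂ - k₁))) ∧
    (hstar ≤ h →
      ℙ {ω | X₂ ω ≤ X₁ ω} = ENNReal.ofReal ((1/2) * (hstar / h) ^ (k₂ - k₁))) :=
  stmt_15_general C₁ C₂ M₁ M₂ hC₁ hC₂ hM₁ hM₂ k₁ k₂ hk h hh β₁ β₂ hstar hβ₁_def hβ₂_def hstar_def X₁
    X₂ hm₁ hm₂ hindep hX₁ hX₂
end
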